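/- Let d be a nonzero integer and let η be a positive rational number with v_p(η) = 0 for every prime p dividing 2d. Suppose v_p(η - 1) ≥ 1 for every odd prime p dividing d, and v_2(η - 1) ≥ 3. Then the generalized Jacobi symbol (d|η) := ∏_{p : v_p(η) ≠ 0} (d|p)^{v_p(η)} equals 1, where each (d|p) is a Legendre symbol. -/

import Mathlib

/-- The Legendre symbol `(a | p)` for a natural number `p` (defined to be `0` if `p` is not
prime). -/
noncomputable def legSym (p : ℕ) (a : ℤ) : ℤ :=
  if hp : p.Prime then
    haveI : Fact p.Prime := ⟨hp⟩
    legendreSym p a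
  else 0

/-- The generalized Jacobi symbol `(d | η) = ∏_{p : v_p(η) ≠ 0} (d|p)^{v_p(η)}`, computed
in `ℚ` since the exponents `v_p(η)` may be negative. -/
noncomputable def genJacobi (d : ℤ) (η : ℚ) : ℚ :=
  ∏ᶠ (p : ℕ) (_ : p.Prime) (_ : padicValRat p η ≠ 0),
    (legSym p d : ℚ) ^ (padicValRat p η)

/-
Write `η = a / b` in lowest terms. Since `v_p(η) = v_p(a) - v_p(b)` and at most one of these is
nonzero, the generalized symbol is the quotient `J(d | a) / J(d | b)` of Jacobi symbols. The
hypotheses say that `a, b` are prime to `2d` and that `a ≡ b` modulo `8` and modulo every odd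
prime dividing `d`. As `J(· | n)` is multiplicative, it is enough to compare `J(p | a)` and
`J(p | b)` for `p = -1`, `2` and odd primes `p ∣ d`; each depends only on the residue modulo
`4|p|`, which divides `8` or `8p`. Hence `J(d | a) = J(d | b) ≠ 0`.
-/

open scoped NumberTheorySymbols

theorem jacobiSym_eq_of_modEq {d : ℤ} {a b : ℕ} (ha : Odd a) (hb : Odd b)
    (h : a ≡ b [MOD 4 * d.natAbs]) : J(d | a) = J(d | b) := by
  rw [jacobiSym.mod_right d ha, jacobiSym.mod_right d hb, h]

theorem jacobiSym_congr_right {d : ℤ} (hd : d ≠ 0) {a b : ℕ} (ha : Odd a) (hb : Odd b)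
    (h8 : a ≡ b [MOD 8]) (hodd : ∀ p : ℕ, p.Prime → Odd p → (p : ℤ) ∣ d → a ≡ b [MOD p]) :
    J(d | a) = J(d | b) := by
  induction d using UniqueFactorizationMonoid.induction_on_prime with
  | h₁ => exact absurd rfl hd
  | h₂ u hu =>
    refine jacobiSym_eq_of_modEq ha hb (h8.of_dvd ?_)
    rw [Int.isUnit_iff_natAbs_eq.mp hu]
    norm_num
  | h₃ x p hx hp ih =>
    have hq : p.natAbs.Prime := Int.prime_iff_natAbs_prime.mp hp
    have hqd : (p.natAbs : ℤ) ∣ p * x := Int.natAbs_dvd.mpr (dvd_mul_right p x)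
    rw [jacobiSym.mul_left, jacobiSym.mul_left,
      ih hx fun q hq hqo hqx => hodd q hq hqo (hqx.mul_left p)]
    congr 1
    refine jacobiSym_eq_of_modEq ha hb ?_
    rcases hq.eq_two_or_odd' with h2 | hodd'
    · rwa [h2]
    · have h8q : a ≡ b [MOD 2 ^ 3 * p.natAbs] :=
        (Nat.modEq_and_modEq_iff_modEq_mul ((Nat.coprime_two_left.mpr hodd').pow_left 3)).mp
          ⟨h8, hodd _ hq hodd' hqd⟩
      exact h8q.of_dvd (Nat.mul_dvd_mul_right (by norm_num) _)

theorem jacobiSym_eq_prod_of_primeFactors_subset (d : ℤ) {n : ℕ} {s : Finset ℕ}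
    (hs : n.primeFactors ⊆ s) : J(d | n) = ∏ p ∈ s, legSym p d ^ n.factorization p := by
  have hlist : n.primeFactorsList.pmap (fun p hp => @legendreSym p ⟨hp⟩ d)
      (fun _ => Nat.prime_of_mem_primeFactorsList) = n.primeFactorsList.map (legSym · d) := by
    rw [← List.pmap_eq_map (fun _ => Nat.prime_of_mem_primeFactorsList)]
    exact List.pmap_congr_left _ fun p _ hp _ => by simp [legSym, hp]
  rw [jacobiSym, hlist, Finset.prod_list_map_count]
  simp_rw [Nat.primeFactorsList_count_eq]
  refine Finset.prod_subset hs fun p _ hp => ?_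
  change p ∉ n.primeFactors at hp
  rw [← Nat.support_factorization, Finsupp.notMem_support_iff] at hp
  rw [hp, pow_zero]

theorem zpow_natCast_sub_natCast_of_eq_zero_or_eq_zero {K : Type*} [DivisionRing K] (x : K)
    {m n : ℕ} (h : m = 0 ∨ n = 0) : x ^ ((m : ℤ) - n) = x ^ m / x ^ n := by
  rcases h with rfl | rfl <;> simp [zpow_neg]

theorem padicValRat_eq_factorization_sub (p : ℕ) (hp : p.Prime) (q : ℚ) :
    padicValRat p q = q.num.natAbs.factorization p - q.den.factorization p := by
  rw [padicValRat_def, Nat.factorization_def _ hp, Nat.factorization_def _ hp]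
  rfl

theorem Rat.factorization_num_eq_zero_or_factorization_den_eq_zero (q : ℚ) (p : ℕ) :
    q.num.natAbs.factorization p = 0 ∨ q.den.factorization p = 0 := by
  by_contra! h
  simp only [← Finsupp.mem_support_iff, Nat.support_factorization] at h
  exact Finset.disjoint_left.mp q.reduced.disjoint_primeFactors h.1 h.2

theorem Rat.not_dvd_num_and_not_dvd_den_of_padicValRat_eq_zero {p : ℕ} (hp : p.Prime) {q : ℚ}
    (hq : q ≠ 0) (h : padicValRat p q = 0) : ¬ p ∣ q.num.natAbs ∧ ¬ p ∣ q.den := by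
  rw [padicValRat_eq_factorization_sub p hp] at h
  obtain ⟨hnum, hden⟩ : q.num.natAbs.factorization p = 0 ∧ q.den.factorization p = 0 := by
    have := q.factorization_num_eq_zero_or_factorization_den_eq_zero p
    omega
  simp only [Nat.factorization_eq_zero_iff, hp, not_true, false_or] at hnum hden
  exact ⟨hnum.resolve_right (by simpa using hq), hden.resolve_right q.den_ne_zero⟩

theorem Rat.den_modEq_num_of_le_padicValRat_sub_one {p k : ℕ} [Fact p.Prime] {q : ℚ}
    (hq : q ≠ 1) (hp : ¬ p ∣ q.den) (hk : (k : ℤ) ≤ padicValRat p (q - 1)) :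
    (q.den : ℤ) ≡ q.num [ZMOD p ^ k] := by
  have hden : ((q.den : ℤ) : ℚ) ≠ 0 := by exact_mod_cast q.den_ne_zero
  have hsub : q - 1 = ((q.num - q.den : ℤ) : ℚ) / (q.den : ℤ) := by
    rw [Int.cast_sub, sub_div, div_self hden, Int.cast_natCast, Rat.num_div_den]
  have hnum : ((q.num - q.den : ℤ) : ℚ) ≠ 0 := (div_ne_zero_iff.mp (hsub ▸ sub_ne_zero.mpr hq)).1
  rw [hsub, padicValRat.div hnum hden, padicValRat.of_int, padicValRat.of_int,
    padicValInt.of_nat, padicValNat.eq_zero_of_not_dvd hp, Nat.cast_zero, sub_zero] at hk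
  rw [Int.modEq_iff_dvd, padicValInt_dvd_iff]
  exact Or.inr (by exact_mod_cast hk)

theorem genJacobi_eq_div (d : ℤ) (η : ℚ) :
    genJacobi d η = (J(d | η.num.natAbs) / J(d | η.den) : ℚ) := by
  set s := η.num.natAbs.primeFactors ∪ η.den.primeFactors
  have hsupp : ∀ p : ℕ, p.Prime → p ∉ s → padicValRat p η = 0 := by
    intro p hp hps
    simp only [s, Finset.mem_union, not_or, ← Nat.support_factorization,
      Finsupp.notMem_support_iff] at hps
    rw [padicValRat_eq_factorization_sub p hp, hps.1, hps.2, sub_self]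
  have hfin : genJacobi d η = ∏ p ∈ s, (legSym p d : ℚ) ^
      ((η.num.natAbs.factorization p : ℤ) - η.den.factorization p) := by
    rw [genJacobi, finprod_eq_prod_of_mulSupport_subset]
    · refine Finset.prod_congr rfl fun p hp => ?_
      have hp' : p.Prime := by
        simp only [s, Finset.mem_union] at hp
        exact hp.elim Nat.prime_of_mem_primeFactors Nat.prime_of_mem_primeFactors
      rw [← padicValRat_eq_factorization_sub p hp']
      by_cases hv : padicValRat p η = 0 <;> simp [hp', hv]
    · intro p hp
      by_contra hps
      refine hp ?_
      by_cases hp' : p.Prime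
      · simp [hp', hsupp p hp' (Finset.mem_coe.not.mp hps)]
      · simp [hp']
  rw [hfin, Finset.prod_congr rfl fun p _ => zpow_natCast_sub_natCast_of_eq_zero_or_eq_zero _
      (η.factorization_num_eq_zero_or_factorization_den_eq_zero p),
    Finset.prod_div_distrib,
    jacobiSym_eq_prod_of_primeFactors_subset d (s := s) Finset.subset_union_left,
    jacobiSym_eq_prod_of_primeFactors_subset d (s := s) Finset.subset_union_right]
  simp only [Int.cast_prod, Int.cast_pow]

theorem stmt8 (d : ℤ) (hd : d ≠ 0) (η : ℚ) (hη : 0 < η)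
    (hunit : ∀ p : ℕ, p.Prime → (p : ℤ) ∣ 2 * d → padicValRat p η = 0)
    (hodd : ∀ p : ℕ, p.Prime → Odd p → (p : ℤ) ∣ d →
      (η - 1 = 0 ∨ 1 ≤ padicValRat p (η - 1)))
    (h2 : η - 1 = 0 ∨ 3 ≤ padicValRat 2 (η - 1)) :
    genJacobi d η = 1 := by
  rcases eq_or_ne η 1 with rfl | hη1
  · simp [genJacobi_eq_div]
  have hη1' : η - 1 ≠ 0 := sub_ne_zero.mpr hη1
  have hcop : ∀ p : ℕ, p.Prime → (p : ℤ) ∣ 2 * d → ¬ p ∣ η.num.natAbs ∧ ¬ p ∣ η.den :=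
    fun p hp hpd => η.not_dvd_num_and_not_dvd_den_of_padicValRat_eq_zero hp hη.ne' (hunit p hp hpd)
  have hmod : ∀ p k : ℕ, p.Prime → (p : ℤ) ∣ 2 * d → (k : ℤ) ≤ padicValRat p (η - 1) →
      η.num.natAbs ≡ η.den [MOD p ^ k] := by
    intro p k hp hpd hk
    have := Fact.mk hp
    rw [← Int.natCast_modEq_iff, Int.natAbs_of_nonneg (Rat.num_nonneg.mpr hη.le), Nat.cast_pow]
    exact (η.den_modEq_num_of_le_padicValRat_sub_one hη1 (hcop p hp hpd).2 hk).symm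
  obtain ⟨ha2, hb2⟩ := hcop 2 Nat.prime_two (dvd_mul_right 2 d)
  have hJ : J(d | η.num.natAbs) = J(d | η.den) :=
    jacobiSym_congr_right hd (Nat.odd_iff.mpr (Nat.two_dvd_ne_zero.mp ha2))
      (Nat.odd_iff.mpr (Nat.two_dvd_ne_zero.mp hb2))
      (hmod 2 3 Nat.prime_two (dvd_mul_right 2 d) (h2.resolve_left hη1'))
      fun p hp hpo hpd => by
        simpa using hmod p 1 hp (hpd.mul_left 2) ((hodd p hp hpo hpd).resolve_left hη1')
  have hJ0 : J(d | η.den) ≠ 0 := jacobiSym.ne_zero <| Nat.coprime_of_dvd fun p hp hpd hpb =>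
    (hcop p hp ((Int.natCast_dvd.mpr hpd).mul_left 2)).2 hpb
  rw [genJacobi_eq_div, hJ, div_self (Int.cast_ne_zero.mpr hJ0)]
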